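/- arXiv:2507.23714 — 2 statements merged into one kernel-verified Lean document; each statement's English description precedes it below -/
import Mathlib

section
/- Let 𝔤 be a finite-dimensional real nilpotent Lie algebra with a nondegenerate symmetric bilinear form g, let 𝔞 be abelian with orthonormal basis {e_α}, ε_α = ±1, and let 𝔤̃ = 𝔤 ⋊ 𝔞 with orthogonal metric g̃ = g ⊕ Σ_α ε_α e^α ⊗ e^α be pseudo-Iwasawa, i.e. each φ_α := −ad(e_α)|_𝔤 is g-symmetric. Define the Ricci forms r̃ic of (𝔤̃, g̃) and ric of (𝔤, g) via the Koszul product, its curvature R(x,y) = ∇_x∇_y − ∇_y∇_x − ∇_{[x,y]}, and ric(x,y) = tr(z ↦ R(z,x)y). Suppose the metric is Einstein: r̃ic(x,y) = λ·g̃(x,y) for all x, y ∈ 𝔤̃ and some real λ. Then the Ricci operator Ric of (𝔤, g), defined by g(Ric(v), w) = ric(v,w), satisfies Ric = λ·id_𝔤 + D, where D := Σ_α ε_α Tr(φ_α)·φ_α, and D is a derivation of the Lie algebra 𝔤. -/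
/-!
Because each `φ_α` is `g`-symmetric, the Koszul formula gives `∇̃_{e_α} = 0`, `∇̃_v e_α = φ_α v`
and `∇̃_v w = ∇_v w - Σ_α ε_α g(φ_α v, w) e_α` for `v, w ∈ 𝔤`. Computing the trace defining
`r̃ic(v, w)` along `𝔤̃ = 𝔤 ⊕ 𝔞`, the diagonal `𝔞`-entries `-ε_α g(φ_α² v, w)` cancel the rank-one
terms `z ↦ ε_α g(φ_α z, w) φ_α v` of the `𝔤`-block, and what is left is
`r̃ic(v, w) = ric(v, w) - g(D v, w)`. The Einstein condition thus reads `Ric = λ id + D`, and `D`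
is a derivation since each `φ_α = -ad(e_α)|_𝔤` is one by the Jacobi identity.
-/

/-- The Ricci form of the Koszul product `nabla` on a Lie algebra `L`:
`ricci nabla x y = tr (z ↦ R(z,x)y)` where `R(x,y) = ∇_x∇_y − ∇_y∇_x − ∇_{⁅x,y⁆}`. -/
noncomputable def ricci {L : Type*} [LieRing L] [LieAlgebra ℝ L]
    (nabla : L →ₗ[ℝ] L →ₗ[ℝ] L) (x y : L) : ℝ :=
  LinearMap.trace ℝ L
    (nabla.flip (nabla x y) - nabla x ∘ₗ nabla.flip y + nabla.flip y ∘ₗ LieAlgebra.ad ℝ L x)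

section OrthSplitting

variable {V : Type*} [AddCommGroup V] [Module ℝ V] {k : ℕ}

structure IsOrthSplitting (B : LinearMap.BilinForm ℝ V) (W : Submodule ℝ V) (e : Fin k → V)
    (ε : Fin k → ℝ) : Prop where
  sup_span_eq_top : W ⊔ Submodule.span ℝ (Set.range e) = ⊤
  orth : ∀ v ∈ W, ∀ α, B v (e α) = 0
  apply_basis : ∀ α β, B (e α) (e β) = if α = β then ε α else 0
  mul_self : ∀ α, ε α * ε α = 1

def orthProj (B : LinearMap.BilinForm ℝ V) (e : Fin k → V) (ε : Fin k → ℝ) : V →ₗ[ℝ] V :=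
  LinearMap.id - ∑ α, (ε α • B.flip (e α)).smulRight (e α)

variable {B : LinearMap.BilinForm ℝ V} {W : Submodule ℝ V} {e : Fin k → V} {ε : Fin k → ℝ}

lemma orthProj_apply (x : V) : orthProj B e ε x = x - ∑ α, (ε α * B x (e α)) • e α := by
  simp [orthProj, LinearMap.sum_apply]

namespace IsOrthSplitting

lemma apply_sum_smul (hS : IsOrthSplitting B W e ε) (c : Fin k → ℝ) (α : Fin k) :
    B (∑ i, c i • e i) (e α) = c α * ε α := by
  simp [hS.apply_basis]

lemma orthProj_mem (hS : IsOrthSplitting B W e ε) (x : V) : orthProj B e ε x ∈ W := by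
  obtain ⟨v, hv, s, hs, rfl⟩ :=
    Submodule.mem_sup.mp (hS.sup_span_eq_top ▸ Submodule.mem_top : x ∈ W ⊔ _)
  obtain ⟨c, rfl⟩ := (Submodule.mem_span_range_iff_exists_fun ℝ).mp hs
  have hcoord : ∀ α, ε α * B (v + ∑ i, c i • e i) (e α) = c α := fun α => by
    rw [map_add, LinearMap.add_apply, hS.orth v hv, hS.apply_sum_smul, zero_add,
      mul_left_comm, hS.mul_self, mul_one]
  rw [orthProj_apply]
  simp only [hcoord, add_sub_cancel_right]
  exact hv

lemma orthProj_of_mem (hS : IsOrthSplitting B W e ε) {v : V} (hv : v ∈ W) :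
    orthProj B e ε v = v := by
  simp [orthProj_apply, hS.orth v hv]

lemma orthProj_basis (hS : IsOrthSplitting B W e ε) (α : Fin k) : orthProj B e ε (e α) = 0 := by
  simp [orthProj_apply, hS.apply_basis, hS.mul_self]

lemma linearMap_ext {M : Type*} [AddCommGroup M] [Module ℝ M] (hS : IsOrthSplitting B W e ε)
    {f g : V →ₗ[ℝ] M} (hW : ∀ w ∈ W, f w = g w) (he : ∀ α, f (e α) = g (e α)) : f = g :=
  LinearMap.ext_on (s := W ∪ Set.range e)
    (by rw [Submodule.span_union, Submodule.span_eq, hS.sup_span_eq_top])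
    (by rintro x (hx | ⟨α, rfl⟩); exacts [hW x hx, he α])

lemma eq_of_apply_eq (hS : IsOrthSplitting B W e ε)
    (hW : ∀ v ∈ W, (∀ w ∈ W, B v w = 0) → v = 0) {x y : V}
    (hW_eq : ∀ w : W, B x w = B y w) (he_eq : ∀ α, B x (e α) = B y (e α)) : x = y := by
  have hproj : orthProj B e ε (x - y) = x - y := by
    simp [orthProj_apply, he_eq]
  refine sub_eq_zero.mp (hW _ (hproj ▸ hS.orthProj_mem _) fun w hw => ?_)
  rw [map_sub, LinearMap.sub_apply, hW_eq ⟨w, hw⟩, sub_self]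

lemma trace_eq [FiniteDimensional ℝ V] (hS : IsOrthSplitting B W e ε) (T : V →ₗ[ℝ] V)
    (T' : W →ₗ[ℝ] W) (hT' : ∀ w : W, (T' w : V) = orthProj B e ε (T w)) :
    LinearMap.trace ℝ V T = LinearMap.trace ℝ W T' + ∑ α, ε α * B (T (e α)) (e α) := by
  let P : V →ₗ[ℝ] W := (orthProj B e ε).codRestrict W hS.orthProj_mem
  have hT'_eq : T' = P ∘ₗ T ∘ₗ W.subtype := LinearMap.ext fun w => Subtype.ext (hT' w)
  have hsplit : T = W.subtype ∘ₗ (P ∘ₗ T) + ∑ α, ((ε α • B.flip (e α)) ∘ₗ T).smulRight (e α) := by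
    ext x
    simp [P, orthProj_apply, LinearMap.sum_apply]
  conv_lhs => rw [hsplit]
  rw [map_add, map_sum, LinearMap.trace_comp_comm', hT'_eq]
  simp [LinearMap.comp_assoc]

end IsOrthSplitting

end OrthSplitting

section Ricci

variable {L : Type*} [LieRing L] [LieAlgebra ℝ L]

def ricciEndo (nabla : L →ₗ[ℝ] L →ₗ[ℝ] L) (x y : L) : L →ₗ[ℝ] L :=
  nabla.flip (nabla x y) - nabla x ∘ₗ nabla.flip y + nabla.flip y ∘ₗ LieAlgebra.ad ℝ L x

lemma ricci_eq_trace_ricciEndo (nabla : L →ₗ[ℝ] L →ₗ[ℝ] L) (x y : L) :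
    ricci nabla x y = LinearMap.trace ℝ L (ricciEndo nabla x y) :=
  rfl

lemma ricciEndo_apply (nabla : L →ₗ[ℝ] L →ₗ[ℝ] L) (x y z : L) :
    ricciEndo nabla x y z = nabla z (nabla x y) - nabla x (nabla z y) + nabla ⁅x, z⁆ y := by
  simp [ricciEndo]

end Ricci

section PseudoIwasawa

variable {L : Type*} [LieRing L] [LieAlgebra ℝ L] {k : ℕ}

def IsKoszul (B : LinearMap.BilinForm ℝ L) (nabla : L →ₗ[ℝ] L →ₗ[ℝ] L) : Prop :=
  ∀ x y z, 2 * B (nabla x y) z = B ⁅x, y⁆ z - B ⁅y, z⁆ x + B ⁅z, x⁆ y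

/-- In the notation of the paper `𝔤 = G`, `𝔞 = span e` and `φ_α = -ad(e_α)|_𝔤`. -/
structure IsPseudoIwasawa (B : LinearMap.BilinForm ℝ L) (G : LieIdeal ℝ L) (e : Fin k → L)
    (ε : Fin k → ℝ) (φ : Fin k → (G →ₗ[ℝ] G)) : Prop where
  splitting : IsOrthSplitting B G.toSubmodule e ε
  nondeg : ∀ v ∈ G, (∀ w ∈ G, B v w = 0) → v = 0
  symm : ∀ x y, B x y = B y x
  lie_basis_basis : ∀ α β, ⁅e α, e β⁆ = 0
  coe_phi : ∀ α (v : G), (φ α v : L) = -⁅e α, (v : L)⁆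
  phi_symm : ∀ α (v w : G), B (φ α v : L) w = B v (φ α w : L)

namespace IsPseudoIwasawa

variable {B : LinearMap.BilinForm ℝ L} {G : LieIdeal ℝ L} {e : Fin k → L} {ε : Fin k → ℝ}
  {φ : Fin k → (G →ₗ[ℝ] G)} {nabla : L →ₗ[ℝ] L →ₗ[ℝ] L}

lemma lie_basis_coe (hP : IsPseudoIwasawa B G e ε φ) (α : Fin k) (v : G) :
    ⁅e α, (v : L)⁆ = -(φ α v : L) := by
  rw [hP.coe_phi, neg_neg]

lemma lie_coe_basis (hP : IsPseudoIwasawa B G e ε φ) (α : Fin k) (v : G) :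
    ⁅(v : L), e α⁆ = φ α v := by
  rw [← lie_skew, hP.lie_basis_coe, neg_neg]

lemma apply_coe_basis (hP : IsPseudoIwasawa B G e ε φ) (v : G) (α : Fin k) :
    B v (e α) = 0 :=
  hP.splitting.orth v v.2 α

lemma apply_basis_coe (hP : IsPseudoIwasawa B G e ε φ) (α : Fin k) (v : G) :
    B (e α) v = 0 := by
  rw [hP.symm, hP.apply_coe_basis]

lemma apply_lie_basis (hP : IsPseudoIwasawa B G e ε φ) (v w : G) (α : Fin k) :
    B ⁅(v : L), (w : L)⁆ (e α) = 0 :=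
  hP.apply_coe_basis ⁅v, w⁆ α

lemma apply_phi_comm (hP : IsPseudoIwasawa B G e ε φ) (α : Fin k) (v w : G) :
    B (φ α v : L) w = B (φ α w : L) v := by
  rw [hP.phi_symm, hP.symm]

lemma eq_of_apply_eq (hP : IsPseudoIwasawa B G e ε φ) {x y : L}
    (hG_eq : ∀ w : G, B x w = B y w) (he_eq : ∀ α, B x (e α) = B y (e α)) : x = y :=
  hP.splitting.eq_of_apply_eq hP.nondeg hG_eq he_eq

lemma orthProj_coe (hP : IsPseudoIwasawa B G e ε φ) (v : G) : orthProj B e ε v = v :=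
  hP.splitting.orthProj_of_mem v.2

lemma nabla_basis_coe (hP : IsPseudoIwasawa B G e ε φ) (hK : IsKoszul B nabla) (α : Fin k)
    (v : G) : nabla (e α) v = 0 := by
  refine hP.eq_of_apply_eq (fun z => ?_) (fun β => ?_)
  · have := hK (e α) v z
    simp only [hP.lie_basis_coe, hP.lie_coe_basis, hP.apply_lie_basis, map_neg, map_zero,
      LinearMap.neg_apply, LinearMap.zero_apply] at this ⊢
    linarith [hP.apply_phi_comm α z v]
  · have := hK (e α) v (e β)
    simp only [hP.lie_basis_coe, hP.lie_coe_basis, hP.lie_basis_basis, hP.apply_coe_basis, map_neg,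
      map_zero, LinearMap.neg_apply, LinearMap.zero_apply] at this ⊢
    linarith

lemma nabla_coe_basis (hP : IsPseudoIwasawa B G e ε φ) (hK : IsKoszul B nabla) (v : G)
    (α : Fin k) : nabla v (e α) = φ α v := by
  refine hP.eq_of_apply_eq (fun z => ?_) (fun β => ?_)
  · have := hK v (e α) z
    simp only [hP.lie_basis_coe, hP.lie_coe_basis, hP.apply_lie_basis, map_neg,
      LinearMap.neg_apply] at this ⊢
    linarith [hP.apply_phi_comm α z v]
  · have := hK v (e α) (e β)
    simp only [hP.lie_basis_coe, hP.lie_coe_basis, hP.lie_basis_basis, hP.apply_coe_basis, map_neg,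
      map_zero, LinearMap.neg_apply, LinearMap.zero_apply] at this ⊢
    linarith

lemma nabla_basis_basis (hP : IsPseudoIwasawa B G e ε φ) (hK : IsKoszul B nabla)
    (α β : Fin k) : nabla (e α) (e β) = 0 := by
  refine hP.eq_of_apply_eq (fun z => ?_) (fun γ => ?_)
  · have := hK (e α) (e β) z
    simp only [hP.lie_basis_coe, hP.lie_coe_basis, hP.lie_basis_basis, hP.apply_coe_basis, map_neg,
      map_zero, LinearMap.neg_apply, LinearMap.zero_apply] at this ⊢
    linarith
  · have := hK (e α) (e β) (e γ)
    simp only [hP.lie_basis_basis, map_zero, LinearMap.zero_apply] at this ⊢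
    linarith

lemma nabla_basis (hP : IsPseudoIwasawa B G e ε φ) (hK : IsKoszul B nabla) (α : Fin k) :
    nabla (e α) = 0 :=
  hP.splitting.linearMap_ext (fun v hv => hP.nabla_basis_coe hK α ⟨v, hv⟩)
    (hP.nabla_basis_basis hK α)

lemma apply_nabla_coe_basis (hP : IsPseudoIwasawa B G e ε φ) (hK : IsKoszul B nabla)
    (v w : G) (α : Fin k) : B (nabla v w) (e α) = -B (φ α v : L) w := by
  have := hK v w (e α)
  rw [hP.lie_basis_coe, hP.lie_coe_basis, hP.apply_lie_basis, map_neg, LinearMap.neg_apply,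
    hP.apply_phi_comm α w] at this
  linarith

lemma nabla_coe_coe (hP : IsPseudoIwasawa B G e ε φ) (hK : IsKoszul B nabla)
    {nablaG : G →ₗ[ℝ] G →ₗ[ℝ] G} (hKG : IsKoszul (B.restrict G.toSubmodule) nablaG) (v w : G) :
    nabla v w = nablaG v w - ∑ α, (ε α * B (φ α v : L) w) • e α := by
  refine hP.eq_of_apply_eq (fun z => ?_) (fun β => ?_)
  · have h := hK v w z
    have hG : 2 * B (nablaG v w : L) z
        = B ⁅(v : L), w⁆ z - B ⁅(w : L), z⁆ v + B ⁅(z : L), v⁆ w := hKG v w z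
    simp only [map_sub, map_sum, map_smul, LinearMap.sub_apply, LinearMap.coe_sum,
      LinearMap.coe_smul, Finset.sum_apply, Pi.smul_apply, hP.apply_basis_coe, smul_eq_mul,
      mul_zero, Finset.sum_const_zero, sub_zero]
    linarith
  · rw [hP.apply_nabla_coe_basis hK, map_sub, LinearMap.sub_apply, hP.apply_coe_basis,
      hP.splitting.apply_sum_smul, mul_right_comm, hP.splitting.mul_self]
    ring

lemma apply_ricciEndo_basis (hP : IsPseudoIwasawa B G e ε φ) (hK : IsKoszul B nabla)
    (v w : G) (α : Fin k) :
    B (ricciEndo nabla v w (e α)) (e α) = -B (φ α (φ α v) : L) w := by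
  simp [ricciEndo_apply, hP.nabla_basis hK, hP.lie_coe_basis, hP.apply_nabla_coe_basis hK]

lemma orthProj_ricciEndo (hP : IsPseudoIwasawa B G e ε φ) (hK : IsKoszul B nabla)
    {nablaG : G →ₗ[ℝ] G →ₗ[ℝ] G} (hKG : IsKoszul (B.restrict G.toSubmodule) nablaG)
    (v w z : G) :
    orthProj B e ε (ricciEndo nabla v w z)
      = ricciEndo nablaG v w z - ∑ β, (ε β * B (φ β v : L) w) • (φ β z : L)
        + ∑ β, (ε β * B (φ β z : L) w) • (φ β v : L) := by
  have hvz : ⁅(v : L), (z : L)⁆ = (⁅v, z⁆ : G) := rfl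
  rw [ricciEndo_apply, ricciEndo_apply, hvz, hP.nabla_coe_coe hK hKG ⁅v, z⁆]
  simp only [hP.nabla_coe_coe hK hKG, map_sub, map_sum, map_smul, hP.nabla_coe_basis hK,
    LieIdeal.coe_bracket_of_module, map_add, hP.orthProj_coe, hP.splitting.orthProj_basis,
    smul_zero, Finset.sum_const_zero, sub_zero, LieSubmodule.coe_add, AddSubgroupClass.coe_sub]
  abel

lemma ricci_coe [FiniteDimensional ℝ L] (hP : IsPseudoIwasawa B G e ε φ) (hK : IsKoszul B nabla)
    {nablaG : G →ₗ[ℝ] G →ₗ[ℝ] G} (hKG : IsKoszul (B.restrict G.toSubmodule) nablaG)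
    (v w : G) :
    ricci nabla v w
      = ricci nablaG v w - ∑ β, (ε β * LinearMap.trace ℝ G (φ β)) * B (φ β v : L) w := by
  let M : G →ₗ[ℝ] G := ricciEndo nablaG v w - ∑ β, (ε β * B (φ β v : L) w) • φ β
      + ∑ β, (ε β • ((B.restrict G.toSubmodule).flip w ∘ₗ φ β)).smulRight (φ β v)
  have hM : ∀ z : G, (M z : L) = orthProj B e ε (ricciEndo nabla v w z) := by
    intro z
    rw [hP.orthProj_ricciEndo hK hKG]
    simp [M]
  rw [ricci_eq_trace_ricciEndo, hP.splitting.trace_eq _ M hM, ricci_eq_trace_ricciEndo]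
  simp only [M, map_add, map_sub, map_sum, map_smul, smul_eq_mul, LinearMap.trace_smulRight,
    LinearMap.smul_apply, LinearMap.coe_comp, Function.comp_apply, LinearMap.BilinForm.flip_apply,
    LinearMap.BilinForm.restrict_apply, LinearMap.domRestrict_apply, hP.apply_ricciEndo_basis hK,
    mul_neg, Finset.sum_neg_distrib, add_neg_cancel_right]
  exact congrArg _ (Finset.sum_congr rfl fun β _ => mul_right_comm _ _ _)

end IsPseudoIwasawa

end PseudoIwasawa

lemma LieIdeal.leibniz_of_coe_eq_neg_lie {L : Type*} [LieRing L] [LieAlgebra ℝ L]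
    {G : LieIdeal ℝ L} (x : L) (f : G →ₗ[ℝ] G) (hf : ∀ v : G, (f v : L) = -⁅x, (v : L)⁆)
    (a b : G) : f ⁅a, b⁆ = ⁅f a, b⁆ + ⁅a, f b⁆ := by
  have hab : ((⁅a, b⁆ : G) : L) = ⁅(a : L), (b : L)⁆ := rfl
  apply Subtype.ext
  change (f ⁅a, b⁆ : L) = ⁅(f a : L), (b : L)⁆ + ⁅(a : L), (f b : L)⁆
  rw [hf, hab, hf, hf, neg_lie, lie_neg, ← neg_add, leibniz_lie]

lemma sum_smul_leibniz {M : Type*} [LieRing M] [LieAlgebra ℝ M] {ι : Type*} (s : Finset ι)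
    (c : ι → ℝ) (f : ι → M →ₗ[ℝ] M) (hf : ∀ i a b, f i ⁅a, b⁆ = ⁅f i a, b⁆ + ⁅a, f i b⁆)
    (a b : M) :
    (∑ i ∈ s, c i • f i) ⁅a, b⁆ = ⁅(∑ i ∈ s, c i • f i) a, b⁆ + ⁅a, (∑ i ∈ s, c i • f i) b⁆ := by
  simp [LinearMap.sum_apply, hf, sum_lie, lie_sum, Finset.sum_add_distrib]

theorem stmt_10_general (L : Type*) [LieRing L] [LieAlgebra ℝ L] [FiniteDimensional ℝ L]
    (Btilde : LinearMap.BilinForm ℝ L) (hBsymm : ∀ x y : L, Btilde x y = Btilde y x)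
    (G : LieIdeal ℝ L)
    (hGnondeg : ∀ v ∈ G, (∀ w ∈ G, Btilde v w = 0) → v = 0)
    (k : ℕ) (e : Fin k → L) (ε : Fin k → ℝ) (hε : ∀ α, ε α = 1 ∨ ε α = -1)
    (hsup : G.toSubmodule ⊔ Submodule.span ℝ (Set.range e) = ⊤)
    (hAabelian : ∀ α β, ⁅e α, e β⁆ = 0)
    (horth : ∀ v ∈ G, ∀ α, Btilde v (e α) = 0)
    (horthA : ∀ α β, Btilde (e α) (e β) = if α = β then ε α else 0)
    (φ : Fin k → (↥G →ₗ[ℝ] ↥G)) (hφ : ∀ α (v : ↥G), ((φ α v : L)) = -⁅e α, (v : L)⁆)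
    -- pseudo-Iwasawa condition: each `φ_α` is `g`-symmetric
    (hIwasawa : ∀ α (v w : ↥G), Btilde (φ α v : L) (w : L) = Btilde (v : L) (φ α w : L))
    (nabla : L →ₗ[ℝ] L →ₗ[ℝ] L)
    (hKoszul : ∀ x y z : L,
      2 * Btilde (nabla x y) z = Btilde ⁅x, y⁆ z - Btilde ⁅y, z⁆ x + Btilde ⁅z, x⁆ y)
    (nablaG : ↥G →ₗ[ℝ] ↥G →ₗ[ℝ] ↥G)
    (hKoszulG : ∀ x y z : ↥G,
      2 * Btilde (nablaG x y : L) (z : L)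
        = Btilde (⁅x, y⁆ : L) (z : L) - Btilde (⁅y, z⁆ : L) (x : L)
          + Btilde (⁅z, x⁆ : L) (y : L))
    -- the metric is Einstein with Einstein constant `lam`
    (lam : ℝ) (hEinstein : ∀ x y : L, ricci nabla x y = lam * Btilde x y)
    -- the Ricci operator of `(𝔤, g)`
    (Ricop : ↥G →ₗ[ℝ] ↥G)
    (hRicop : ∀ v w : ↥G, Btilde (Ricop v : L) (w : L) = ricci nablaG v w) :
    Ricop = lam • LinearMap.id + ∑ α, (ε α * LinearMap.trace ℝ ↥G (φ α)) • φ α ∧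
    (∀ v w : ↥G,
      (∑ α, (ε α * LinearMap.trace ℝ ↥G (φ α)) • φ α) ⁅v, w⁆
        = ⁅(∑ α, (ε α * LinearMap.trace ℝ ↥G (φ α)) • φ α) v, w⁆
          + ⁅v, (∑ α, (ε α * LinearMap.trace ℝ ↥G (φ α)) • φ α) w⁆) := by
  have hP : IsPseudoIwasawa Btilde G e ε φ :=
    { splitting := ⟨hsup, horth, horthA, fun α => by rcases hε α with h | h <;> simp [h]⟩
      nondeg := hGnondeg
      symm := hBsymm
      lie_basis_basis := hAabelian
      coe_phi := hφ
      phi_symm := hIwasawa }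
  refine ⟨LinearMap.ext fun v => Subtype.ext (hP.eq_of_apply_eq (fun w => ?_) fun α => ?_),
    sum_smul_leibniz _ _ _ fun α => LieIdeal.leibniz_of_coe_eq_neg_lie (e α) (φ α) (hφ α)⟩
  · have hric := hP.ricci_coe hKoszul hKoszulG v w
    rw [hEinstein] at hric
    rw [hRicop]
    simp only [LinearMap.add_apply, LinearMap.smul_apply, LinearMap.id_coe, id_eq,
      LinearMap.sum_apply, LieSubmodule.coe_add, SetLike.val_smul, AddSubmonoidClass.coe_finsetSum,
      map_add, map_smul, map_sum, smul_eq_mul]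
    linarith
  · simp only [hP.apply_coe_basis]

/-- The nilsoliton equation: a pseudo-Iwasawa Einstein solvmanifold `𝔤̃ = 𝔤 ⋊ 𝔞` induces
on its nilpotent part the equation `Ric = λ id + D` with `D = Σ_α ε_α Tr(φ_α) φ_α`
a derivation of `𝔤`. -/
theorem stmt_10 (L : Type*) [LieRing L] [LieAlgebra ℝ L] [FiniteDimensional ℝ L]
    (Btilde : LinearMap.BilinForm ℝ L) (hBsymm : ∀ x y : L, Btilde x y = Btilde y x)
    (hBnondeg : Btilde.Nondegenerate)
    (G : LieIdeal ℝ L) (hGnilp : LieRing.IsNilpotent ↥G)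
    (hGnondeg : ∀ v ∈ G, (∀ w ∈ G, Btilde v w = 0) → v = 0)
    (k : ℕ) (e : Fin k → L) (ε : Fin k → ℝ) (hε : ∀ α, ε α = 1 ∨ ε α = -1)
    (hind : LinearIndependent ℝ e)
    (hsup : G.toSubmodule ⊔ Submodule.span ℝ (Set.range e) = ⊤)
    (hinf : G.toSubmodule ⊓ Submodule.span ℝ (Set.range e) = ⊥)
    (hAabelian : ∀ α β, ⁅e α, e β⁆ = 0)
    (horth : ∀ v ∈ G, ∀ α, Btilde v (e α) = 0)
    (horthA : ∀ α β, Btilde (e α) (e β) = if α = β then ε α else 0)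
    (φ : Fin k → (↥G →ₗ[ℝ] ↥G)) (hφ : ∀ α (v : ↥G), ((φ α v : L)) = -⁅e α, (v : L)⁆)
    -- pseudo-Iwasawa condition: each `φ_α` is `g`-symmetric
    (hIwasawa : ∀ α (v w : ↥G), Btilde (φ α v : L) (w : L) = Btilde (v : L) (φ α w : L))
    (nabla : L →ₗ[ℝ] L →ₗ[ℝ] L)
    (hKoszul : ∀ x y z : L,
      2 * Btilde (nabla x y) z = Btilde ⁅x, y⁆ z - Btilde ⁅y, z⁆ x + Btilde ⁅z, x⁆ y)
    (nablaG : ↥G →ₗ[ℝ] ↥G →ₗ[ℝ] ↥G)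
    (hKoszulG : ∀ x y z : ↥G,
      2 * Btilde (nablaG x y : L) (z : L)
        = Btilde (⁅x, y⁆ : L) (z : L) - Btilde (⁅y, z⁆ : L) (x : L)
          + Btilde (⁅z, x⁆ : L) (y : L))
    -- the metric is Einstein with Einstein constant `lam`
    (lam : ℝ) (hEinstein : ∀ x y : L, ricci nabla x y = lam * Btilde x y)
    -- the Ricci operator of `(𝔤, g)`
    (Ricop : ↥G →ₗ[ℝ] ↥G)
    (hRicop : ∀ v w : ↥G, Btilde (Ricop v : L) (w : L) = ricci nablaG v w) :
    Ricop = lam • LinearMap.id + ∑ α, (ε α * LinearMap.trace ℝ ↥G (φ α)) • φ α ∧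
    (∀ v w : ↥G,
      (∑ α, (ε α * LinearMap.trace ℝ ↥G (φ α)) • φ α) ⁅v, w⁆
        = ⁅(∑ α, (ε α * LinearMap.trace ℝ ↥G (φ α)) • φ α) v, w⁆
          + ⁅v, (∑ α, (ε α * LinearMap.trace ℝ ↥G (φ α)) • φ α) w⁆) :=
  stmt_10_general L Btilde hBsymm G hGnondeg k e ε hε hsup hAabelian horth horthA φ hφ hIwasawa
    nabla hKoszul nablaG hKoszulG lam hEinstein Ricop hRicop
end

section
/- Let 𝔤 be an abelian real Lie algebra of dimension n with a nondegenerate symmetric bilinear form g, let 𝔞 be abelian of dimension k with orthonormal basis {e_α}, ε_α = ±1, and let 𝔤̃ = 𝔤 ⋊ 𝔞 with orthogonal metric g̃ = g ⊕ Σ_α ε_α e^α ⊗ e^α be pseudo-Iwasawa, with φ_α := −ad(e_α)|_𝔤 g-symmetric. Define the scalar curvature s of (𝔤̃, g̃) as the g̃-trace of its Ricci form r̃ic, i.e. s = Σ_i ε̃_i r̃ic(f_i, f_i) for any orthonormal basis {f_i} of 𝔤̃ with ε̃_i = g̃(f_i,f_i). Then s = −Σ_α ε_α ( (Tr φ_α)²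 + Tr(φ_α ∘ φ_α) ). -/
namespace LinearMap.BilinForm

variable {K M : Type*} [Field K] [AddCommGroup M] [Module K M] {B : LinearMap.BilinForm K M}
  {ι : Type*} [Fintype ι] [DecidableEq ι] {e : ι → M} {ε : ι → K}

theorem apply_sum_smul_of_orthonormal
    (he : ∀ α β, B (e α) (e β) = if α = β then ε α else 0) (c : ι → K) (α : ι) :
    B (∑ β, c β • e β) (e α) = c α * ε α := by
  simp [map_sum, he]

theorem eq_sum_smul_of_mem_span_orthonormal (hε : ∀ α, ε α * ε α = 1)
    (he : ∀ α β, B (e α) (e β) = if α = β then ε α else 0) {x : M}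
    (hx : x ∈ Submodule.span K (Set.range e)) : x = ∑ α, (ε α * B x (e α)) • e α := by
  obtain ⟨c, rfl⟩ := Submodule.mem_span_range_iff_exists_fun K |>.mp hx
  congr! 2 with α
  rw [apply_sum_smul_of_orthonormal he, mul_left_comm, hε, mul_one]

theorem eq_projectionOnto_add_sum_smul {P : Submodule K M}
    (hPe : IsCompl P (Submodule.span K (Set.range e))) (hP : ∀ v ∈ P, ∀ α, B v (e α) = 0)
    (hε : ∀ α, ε α * ε α = 1) (he : ∀ α β, B (e α) (e β) = if α = β then ε α else 0) (x : M) :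
    x = P.projectionOnto _ hPe x + ∑ α, (ε α * B x (e α)) • e α := by
  set Q := Submodule.span K (Set.range e)
  have hBQ : ∀ α, B (Q.projection P hPe.symm x) (e α) = B x (e α) := fun α => by
    rw [Submodule.projection_eq_self_sub_projection hPe, map_sub, LinearMap.sub_apply,
      hP _ (Submodule.projection_apply_mem _ _), sub_zero]
  have hQ := eq_sum_smul_of_mem_span_orthonormal hε he (Q.projection_apply_mem hPe.symm x)
  simp_rw [hBQ] at hQ
  rw [← hQ, Submodule.coe_projectionOnto_apply, P.projection_add_projection_eq_self]

variable [FiniteDimensional K M]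

theorem trace_eq_trace_projectionOnto_add_sum {P : Submodule K M}
    (hPe : IsCompl P (Submodule.span K (Set.range e))) (hP : ∀ v ∈ P, ∀ α, B v (e α) = 0)
    (hε : ∀ α, ε α * ε α = 1) (he : ∀ α β, B (e α) (e β) = if α = β then ε α else 0)
    (T : M →ₗ[K] M) :
    trace K M T = trace K P (P.projectionOnto _ hPe ∘ₗ T ∘ₗ P.subtype)
      + ∑ α, ε α * B (T (e α)) (e α) := by
  have hT : T = (T ∘ₗ P.subtype) ∘ₗ P.projectionOnto _ hPe
      + ∑ α, (ε α • B.flip (e α)).smulRight (T (e α)) := by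
    ext x
    conv_lhs => rw [eq_projectionOnto_add_sum_smul hPe hP hε he x]
    simp [smul_eq_mul]
  conv_lhs => rw [hT]
  rw [map_add, trace_comp_comm', map_sum]
  simp [smul_eq_mul]

theorem trace_eq_sum_of_orthonormal (f : Module.Basis ι K M)
    (hε : ∀ i, ε i * ε i = 1) (hf : ∀ i j, B (f i) (f j) = if i = j then ε i else 0)
    (T : M →ₗ[K] M) : trace K M T = ∑ i, ε i * B (T (f i)) (f i) := by
  have hcompl : IsCompl ⊥ (Submodule.span K (Set.range f)) := by
    rw [f.span_eq]; exact isCompl_bot_top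
  rw [trace_eq_trace_projectionOnto_add_sum (P := ⊥) hcompl (by simp) hε hf,
    Subsingleton.elim (_ ∘ₗ _) 0, map_zero, zero_add]

end LinearMap.BilinForm

open LinearMap (trace)

section Ricci

variable {L : Type*} [LieRing L] [LieAlgebra ℝ L]

noncomputable def ricciForm (nabla : L →ₗ[ℝ] L →ₗ[ℝ] L) : LinearMap.BilinForm ℝ L :=
  LinearMap.mk₂ ℝ (ricci nabla)
    (fun x₁ x₂ y => by
      simp only [ricci, ← map_add]
      congr 1
      ext
      simp only [map_add, LinearMap.add_apply, LinearMap.sub_apply, LinearMap.flip_apply,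
        LinearMap.coe_comp, Function.comp_apply, LieAlgebra.ad_apply]
      abel)
    (fun c x y => by
      simp only [ricci, ← map_smul]
      congr 1
      ext
      simp [smul_sub])
    (fun x y₁ y₂ => by
      simp only [ricci, ← map_add]
      congr 1
      ext
      simp only [map_add, LinearMap.add_apply, LinearMap.sub_apply, LinearMap.flip_apply,
        LinearMap.coe_comp, Function.comp_apply, LieAlgebra.ad_apply]
      abel)
    (fun c x y => by
      simp only [ricci, ← map_smul]
      congr 1
      ext
      simp [smul_sub])

@[simp]
theorem ricciForm_apply (nabla : L →ₗ[ℝ] L →ₗ[ℝ] L) (x y : L) :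
    ricciForm nabla x y = ricci nabla x y := rfl

theorem ricci_eq_trace_sub_trace {nabla : L →ₗ[ℝ] L →ₗ[ℝ] L}
    (htorsion : ∀ x z : L, ⁅x, z⁆ = nabla x z - nabla z x) [FiniteDimensional ℝ L] (x y : L) :
    ricci nabla x y
      = trace ℝ L (nabla.flip (nabla x y)) - trace ℝ L (nabla.flip y ∘ₗ nabla.flip x) := by
  have had : LieAlgebra.ad ℝ L x = nabla x - nabla.flip x := by
    ext z; simp [htorsion]
  rw [ricci, had, LinearMap.comp_sub, map_add, map_sub, map_sub, LinearMap.trace_comp_comm']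
  ring

def IsKoszulProduct (B : LinearMap.BilinForm ℝ L) (nabla : L →ₗ[ℝ] L →ₗ[ℝ] L) : Prop :=
  ∀ x y z : L, 2 * B (nabla x y) z = B ⁅x, y⁆ z - B ⁅y, z⁆ x + B ⁅z, x⁆ y

theorem IsKoszulProduct.lie_eq_sub {B : LinearMap.BilinForm ℝ L} {nabla : L →ₗ[ℝ] L →ₗ[ℝ] L}
    (hK : IsKoszulProduct B nabla) (hB : B.Nondegenerate) (x z : L) :
    ⁅x, z⁆ = nabla x z - nabla z x := by
  refine LinearMap.ker_eq_bot.mp hB.ker_eq_bot (LinearMap.ext fun w => ?_)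
  have h₁ := hK x z w
  have h₂ := hK z x w
  rw [← lie_skew z x, ← lie_skew x w, ← lie_skew w z] at h₂
  simp only [map_sub, LinearMap.sub_apply, map_neg, LinearMap.neg_apply] at h₂ ⊢
  linarith

end Ricci

structure IsAbelianPseudoIwasawa {L ι : Type*} [LieRing L] [LieAlgebra ℝ L] [DecidableEq ι]
    (B : LinearMap.BilinForm ℝ L) (G : Submodule ℝ L) (e : ι → L) (ε : ι → ℝ)
    (φ : ι → Module.End ℝ G) : Prop where
  symm : ∀ x y, B x y = B y x
  nondegenerate : B.Nondegenerate
  isCompl : IsCompl G (Submodule.span ℝ (Set.range e))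
  orthogonal : ∀ v ∈ G, ∀ α, B v (e α) = 0
  orthonormal : ∀ α β, B (e α) (e β) = if α = β then ε α else 0
  mul_self_sign : ∀ α, ε α * ε α = 1
  lie_coe_coe : ∀ v ∈ G, ∀ w ∈ G, ⁅v, w⁆ = 0
  lie_e_e : ∀ α β, ⁅e α, e β⁆ = 0
  lie_e_coe : ∀ α (v : G), ⁅e α, (v : L)⁆ = -(φ α v : L)
  isSymm : ∀ α (v w : G), B (φ α v) w = B v (φ α w)

namespace IsAbelianPseudoIwasawa

variable {L ι : Type*} [LieRing L] [LieAlgebra ℝ L] [DecidableEq ι]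
  {B : LinearMap.BilinForm ℝ L} {G : Submodule ℝ L} {e : ι → L} {ε : ι → ℝ}
  {φ : ι → Module.End ℝ G} {nabla : L →ₗ[ℝ] L →ₗ[ℝ] L}

theorem lie_coe_e (h : IsAbelianPseudoIwasawa B G e ε φ) (v : G) (α : ι) :
    ⁅(v : L), e α⁆ = φ α v := by
  rw [← lie_skew, h.lie_e_coe, neg_neg]

theorem apply_e_coe (h : IsAbelianPseudoIwasawa B G e ε φ) (α : ι) (v : G) : B (e α) v = 0 := by
  rw [h.symm]; exact h.orthogonal v v.2 α

theorem span_union_eq_top (h : IsAbelianPseudoIwasawa B G e ε φ) :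
    Submodule.span ℝ ((G : Set L) ∪ Set.range e) = ⊤ := by
  rw [Submodule.span_union, Submodule.span_eq, h.isCompl.sup_eq_top]

theorem eq_of_apply_eq (h : IsAbelianPseudoIwasawa B G e ε φ) {x y : L}
    (hG : ∀ w : G, B x w = B y w) (he : ∀ β, B x (e β) = B y (e β)) : x = y := by
  refine LinearMap.ker_eq_bot.mp h.nondegenerate.ker_eq_bot
    (LinearMap.ext_on h.span_union_eq_top ?_)
  rintro z (hz | ⟨β, rfl⟩)
  exacts [hG ⟨z, hz⟩, he β]

theorem nabla_eq_of_koszul (h : IsAbelianPseudoIwasawa B G e ε φ)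
    (hK : IsKoszulProduct B nabla) {x y u : L}
    (hG : ∀ w : G, B ⁅x, y⁆ w - B ⁅y, w⁆ x + B ⁅(w : L), x⁆ y = 2 * B u w)
    (he : ∀ β, B ⁅x, y⁆ (e β) - B ⁅y, e β⁆ x + B ⁅e β, x⁆ y = 2 * B u (e β)) :
    nabla x y = u := by
  refine h.eq_of_apply_eq (fun w => ?_) (fun β => ?_)
  · linarith [hK x y w, hG w]
  · linarith [hK x y (e β), he β]

theorem nabla_e_coe (h : IsAbelianPseudoIwasawa B G e ε φ) (hK : IsKoszulProduct B nabla)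
    (α : ι) (v : G) : nabla (e α) v = 0 := by
  refine h.nabla_eq_of_koszul hK (fun w => ?_) (fun β => ?_)
  · rw [h.lie_e_coe, h.lie_coe_coe _ v.2 _ w.2, h.lie_coe_e]
    simp only [map_neg, map_zero, LinearMap.neg_apply, LinearMap.zero_apply]
    linarith [h.isSymm α w v, h.symm w (φ α v)]
  · rw [h.lie_e_coe, h.lie_coe_e, h.lie_e_e]
    simp [h.orthogonal]

theorem nabla_e_e (h : IsAbelianPseudoIwasawa B G e ε φ) (hK : IsKoszulProduct B nabla)
    (α β : ι) : nabla (e α) (e β) = 0 := by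
  refine h.nabla_eq_of_koszul hK (fun w => ?_) (fun γ => ?_)
  · rw [h.lie_e_e, h.lie_e_coe, h.lie_coe_e]
    simp [h.orthogonal]
  · simp [h.lie_e_e]

theorem nabla_e (h : IsAbelianPseudoIwasawa B G e ε φ) (hK : IsKoszulProduct B nabla)
    (α : ι) : nabla (e α) = 0 := by
  refine LinearMap.ext_on h.span_union_eq_top ?_
  rintro z (hz | ⟨β, rfl⟩)
  exacts [h.nabla_e_coe hK α ⟨z, hz⟩, h.nabla_e_e hK α β]

theorem nabla_coe_e (h : IsAbelianPseudoIwasawa B G e ε φ) (hK : IsKoszulProduct B nabla)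
    (v : G) (α : ι) : nabla v (e α) = φ α v := by
  refine h.nabla_eq_of_koszul hK (fun w => ?_) (fun β => ?_)
  · rw [h.lie_coe_e, h.lie_e_coe, h.lie_coe_coe _ w.2 _ v.2]
    simp only [map_neg, map_zero, LinearMap.neg_apply, LinearMap.zero_apply]
    linarith [h.isSymm α w v, h.symm w (φ α v)]
  · rw [h.lie_coe_e, h.lie_e_e, h.lie_e_coe]
    simp [h.orthogonal]

theorem nabla_eq_zero_of_mem_span (h : IsAbelianPseudoIwasawa B G e ε φ)
    (hK : IsKoszulProduct B nabla) {x : L} (hx : x ∈ Submodule.span ℝ (Set.range e)) :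
    nabla x = 0 :=
  Submodule.span_le (p := LinearMap.ker nabla) |>.mpr
    (by rintro _ ⟨α, rfl⟩; exact h.nabla_e hK α) hx

theorem nabla_flip_e (h : IsAbelianPseudoIwasawa B G e ε φ) (hK : IsKoszulProduct B nabla)
    (γ : ι) :
    nabla.flip (e γ) = G.subtype ∘ₗ φ γ ∘ₗ G.projectionOnto _ h.isCompl := by
  refine LinearMap.ext_on h.span_union_eq_top ?_
  rintro z (hz | ⟨β, rfl⟩)
  · simp [Submodule.projectionOnto_apply_of_mem_left h.isCompl hz,
      ← h.nabla_coe_e hK ⟨z, hz⟩ γ]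
  · simp [Submodule.projectionOnto_apply_of_mem_right h.isCompl
      (Submodule.subset_span ⟨β, rfl⟩), h.nabla_e hK]

theorem trace_nabla_flip_e [FiniteDimensional ℝ L] (h : IsAbelianPseudoIwasawa B G e ε φ)
    (hK : IsKoszulProduct B nabla) (γ : ι) : trace ℝ L (nabla.flip (e γ)) = trace ℝ G (φ γ) := by
  rw [h.nabla_flip_e hK, LinearMap.trace_comp_comm', LinearMap.comp_assoc,
    Submodule.projectionOnto_comp_subtype, LinearMap.comp_id]

theorem ricci_e_self [FiniteDimensional ℝ L] (h : IsAbelianPseudoIwasawa B G e ε φ)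
    (hK : IsKoszulProduct B nabla) (α : ι) : ricci nabla (e α) (e α) = -trace ℝ G (φ α ∘ₗ φ α) := by
  rw [ricci_eq_trace_sub_trace (hK.lie_eq_sub h.nondegenerate), h.nabla_e_e hK, map_zero,
    map_zero, zero_sub, h.nabla_flip_e hK]
  simp only [LinearMap.comp_assoc]
  rw [LinearMap.trace_comp_comm']
  congr 2
  ext
  simp

variable [Fintype ι]

theorem nabla_coe_coe (h : IsAbelianPseudoIwasawa B G e ε φ) (hK : IsKoszulProduct B nabla)
    (v w : G) : nabla v w = -∑ α, (ε α * B (φ α v) w) • e α := by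
  refine h.nabla_eq_of_koszul hK (fun u => ?_) (fun β => ?_)
  · simp [h.lie_coe_coe _ v.2 _ w.2, h.lie_coe_coe _ w.2 _ u.2, h.lie_coe_coe _ u.2 _ v.2,
      map_sum, h.apply_e_coe]
  · rw [h.lie_coe_coe _ v.2 _ w.2, h.lie_coe_e, h.lie_e_coe, map_neg, map_neg,
      LinearMap.neg_apply, LinearMap.neg_apply,
      LinearMap.BilinForm.apply_sum_smul_of_orthonormal h.orthonormal]
    simp only [map_zero, LinearMap.zero_apply]
    linear_combination 2 * B (φ β v) w * h.mul_self_sign β - h.isSymm β w v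
      - h.symm w (φ β v)

theorem nabla_mem_span (h : IsAbelianPseudoIwasawa B G e ε φ) (hK : IsKoszulProduct B nabla)
    (z : L) (w : G) : nabla z w ∈ Submodule.span ℝ (Set.range e) := by
  have hle : G ⊔ Submodule.span ℝ (Set.range e)
      ≤ (Submodule.span ℝ (Set.range e)).comap (nabla.flip w) := by
    refine sup_le (fun v hv => ?_) (Submodule.span_le.mpr ?_)
    · simp only [Submodule.mem_comap, LinearMap.flip_apply]
      rw [show v = ((⟨v, hv⟩ : G) : L) from rfl, h.nabla_coe_coe hK]
      exact Submodule.neg_mem _ (Submodule.sum_mem _ fun α _ =>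
        Submodule.smul_mem _ _ (Submodule.subset_span ⟨α, rfl⟩))
    · rintro _ ⟨α, rfl⟩
      simp [h.nabla_e hK]
  exact hle (h.isCompl.sup_eq_top ▸ Submodule.mem_top)

theorem nabla_flip_comp_flip_coe (h : IsAbelianPseudoIwasawa B G e ε φ)
    (hK : IsKoszulProduct B nabla) (a : L) (w : G) : nabla.flip a ∘ₗ nabla.flip w = 0 := by
  ext z
  simp [h.nabla_eq_zero_of_mem_span hK (h.nabla_mem_span hK z w)]

theorem trace_nabla_flip_coe (h : IsAbelianPseudoIwasawa B G e ε φ) (hK : IsKoszulProduct B nabla)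
    (w : G) : trace ℝ L (nabla.flip w) = 0 :=
  (LinearMap.isNilpotent_trace_of_isNilpotent
    ⟨2, by rw [pow_two, Module.End.mul_eq_comp, h.nabla_flip_comp_flip_coe hK]⟩).eq_zero

variable [FiniteDimensional ℝ L]

theorem ricci_coe_coe (h : IsAbelianPseudoIwasawa B G e ε φ) (hK : IsKoszulProduct B nabla)
    (v w : G) : ricci nabla v w = -∑ α, ε α * trace ℝ G (φ α) * B (φ α v) w := by
  rw [ricci_eq_trace_sub_trace (hK.lie_eq_sub h.nondegenerate), h.nabla_flip_comp_flip_coe hK,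
    map_zero, sub_zero, h.nabla_coe_coe hK]
  simp only [map_neg, map_sum, map_smul, h.trace_nabla_flip_e hK, smul_eq_mul, neg_inj]
  exact Finset.sum_congr rfl fun α _ => by ring

theorem ricci_coe_e (h : IsAbelianPseudoIwasawa B G e ε φ) (hK : IsKoszulProduct B nabla)
    (v : G) (γ : ι) : ricci nabla v (e γ) = 0 := by
  rw [ricci_eq_trace_sub_trace (hK.lie_eq_sub h.nondegenerate), h.nabla_coe_e hK,
    h.trace_nabla_flip_coe hK, h.nabla_flip_comp_flip_coe hK, map_zero, sub_zero]

theorem symmCompOfNondegenerate_ricciForm_coe (h : IsAbelianPseudoIwasawa B G e ε φ)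
    (hK : IsKoszulProduct B nabla) (v : G) :
    (ricciForm nabla).symmCompOfNondegenerate B h.nondegenerate v
      = ((-∑ α, (ε α * trace ℝ G (φ α)) • φ α) v : G) := by
  refine h.eq_of_apply_eq (fun w => ?_) (fun β => ?_)
  · rw [LinearMap.BilinForm.symmCompOfNondegenerate_left_apply, ricciForm_apply,
      h.ricci_coe_coe hK]
    simp [mul_assoc]
  · rw [LinearMap.BilinForm.symmCompOfNondegenerate_left_apply, ricciForm_apply,
      h.ricci_coe_e hK, h.orthogonal _ (Submodule.coe_mem _)]

theorem trace_symmCompOfNondegenerate_ricciForm (h : IsAbelianPseudoIwasawa B G e ε φ)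
    (hK : IsKoszulProduct B nabla) :
    trace ℝ L ((ricciForm nabla).symmCompOfNondegenerate B h.nondegenerate)
      = -∑ α, ε α * (trace ℝ G (φ α) ^ 2 + trace ℝ G (φ α ∘ₗ φ α)) := by
  have hG : G.projectionOnto _ h.isCompl
      ∘ₗ (ricciForm nabla).symmCompOfNondegenerate B h.nondegenerate ∘ₗ G.subtype
      = -∑ α, (ε α * trace ℝ G (φ α)) • φ α := by
    ext v
    simp only [LinearMap.comp_apply, Submodule.subtype_apply,
      h.symmCompOfNondegenerate_ricciForm_coe hK, Submodule.projectionOnto_apply_left]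
  rw [LinearMap.BilinForm.trace_eq_trace_projectionOnto_add_sum h.isCompl h.orthogonal
    h.mul_self_sign h.orthonormal, hG]
  simp only [LinearMap.BilinForm.symmCompOfNondegenerate_left_apply, ricciForm_apply,
    h.ricci_e_self hK, map_neg, map_sum, map_smul, smul_eq_mul]
  rw [← Finset.sum_neg_distrib, ← Finset.sum_neg_distrib, ← Finset.sum_add_distrib]
  exact Finset.sum_congr rfl fun α _ => by ring

end IsAbelianPseudoIwasawa

theorem stmt_12_general (L : Type*) [LieRing L] [LieAlgebra ℝ L] [FiniteDimensional ℝ L]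
    (Btilde : LinearMap.BilinForm ℝ L) (hBsymm : ∀ x y : L, Btilde x y = Btilde y x)
    (hBnondeg : Btilde.Nondegenerate)
    (G : LieIdeal ℝ L)
    -- the ideal `𝔤` is abelian, of dimension `n`
    (hGabelian : ∀ v ∈ G, ∀ w ∈ G, ⁅v, w⁆ = 0)
    (k : ℕ) (e : Fin k → L) (ε : Fin k → ℝ) (hε : ∀ α, ε α = 1 ∨ ε α = -1)
    (hsup : G.toSubmodule ⊔ Submodule.span ℝ (Set.range e) = ⊤)
    (hinf : G.toSubmodule ⊓ Submodule.span ℝ (Set.range e) = ⊥)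
    (hAabelian : ∀ α β, ⁅e α, e β⁆ = 0)
    (horth : ∀ v ∈ G, ∀ α, Btilde v (e α) = 0)
    (horthA : ∀ α β, Btilde (e α) (e β) = if α = β then ε α else 0)
    (φ : Fin k → (↥G →ₗ[ℝ] ↥G)) (hφ : ∀ α (v : ↥G), ((φ α v : L)) = -⁅e α, (v : L)⁆)
    -- pseudo-Iwasawa condition: each `φ_α` is `g`-symmetric
    (hIwasawa : ∀ α (v w : ↥G), Btilde (φ α v : L) (w : L) = Btilde (v : L) (φ α w : L))
    (nabla : L →ₗ[ℝ] L →ₗ[ℝ] L)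
    (hKoszul : ∀ x y z : L,
      2 * Btilde (nabla x y) z = Btilde ⁅x, y⁆ z - Btilde ⁅y, z⁆ x + Btilde ⁅z, x⁆ y)
    -- an orthonormal basis of `𝔤̃`
    (m : ℕ) (f : Module.Basis (Fin m) ℝ L) (δ : Fin m → ℝ) (hδ : ∀ i, δ i = 1 ∨ δ i = -1)
    (horthf : ∀ i j, Btilde (f i) (f j) = if i = j then δ i else 0) :
    ∑ i, δ i * ricci nabla (f i) (f i)
      = -∑ α, ε α * ((LinearMap.trace ℝ ↥G (φ α)) ^ 2
          + LinearMap.trace ℝ ↥G (φ α ∘ₗ φ α)) := by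
  have h : IsAbelianPseudoIwasawa Btilde G.toSubmodule e ε φ :=
    { symm := hBsymm
      nondegenerate := hBnondeg
      isCompl := ⟨disjoint_iff.mpr hinf, codisjoint_iff.mpr hsup⟩
      orthogonal := horth
      orthonormal := horthA
      mul_self_sign := fun α => by rcases hε α with h | h <;> simp [h]
      lie_coe_coe := hGabelian
      lie_e_e := hAabelian
      lie_e_coe := fun α v => by rw [hφ, neg_neg]
      isSymm := hIwasawa }
  refine Eq.trans ?_ (h.trace_symmCompOfNondegenerate_ricciForm hKoszul)
  rw [LinearMap.BilinForm.trace_eq_sum_of_orthonormal f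
      (fun i => by rcases hδ i with h | h <;> simp [h]) horthf]
  simp

/-- Scalar curvature of an abelian pseudo-Iwasawa standard decomposition `𝔤̃ = 𝔤 ⋊ 𝔞`:
`s = −Σ_α ε_α ((Tr φ_α)² + Tr(φ_α ∘ φ_α))`, where `s` is the `g̃`-trace of the Ricci
form, computed in any orthonormal basis `{f_i}` of `𝔤̃` with `g̃(f_i,f_i) = δ_i = ±1`. -/
theorem stmt_12 (L : Type*) [LieRing L] [LieAlgebra ℝ L] [FiniteDimensional ℝ L]
    (Btilde : LinearMap.BilinForm ℝ L) (hBsymm : ∀ x y : L, Btilde x y = Btilde y x)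
    (hBnondeg : Btilde.Nondegenerate)
    (G : LieIdeal ℝ L)
    -- the ideal `𝔤` is abelian, of dimension `n`
    (hGabelian : ∀ v ∈ G, ∀ w ∈ G, ⁅v, w⁆ = 0)
    (n : ℕ) (hn : Module.finrank ℝ ↥G = n)
    (hGnondeg : ∀ v ∈ G, (∀ w ∈ G, Btilde v w = 0) → v = 0)
    (k : ℕ) (e : Fin k → L) (ε : Fin k → ℝ) (hε : ∀ α, ε α = 1 ∨ ε α = -1)
    (hind : LinearIndependent ℝ e)
    (hsup : G.toSubmodule ⊔ Submodule.span ℝ (Set.range e) = ⊤)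
    (hinf : G.toSubmodule ⊓ Submodule.span ℝ (Set.range e) = ⊥)
    (hAabelian : ∀ α β, ⁅e α, e β⁆ = 0)
    (horth : ∀ v ∈ G, ∀ α, Btilde v (e α) = 0)
    (horthA : ∀ α β, Btilde (e α) (e β) = if α = β then ε α else 0)
    (φ : Fin k → (↥G →ₗ[ℝ] ↥G)) (hφ : ∀ α (v : ↥G), ((φ α v : L)) = -⁅e α, (v : L)⁆)
    -- pseudo-Iwasawa condition: each `φ_α` is `g`-symmetric
    (hIwasawa : ∀ α (v w : ↥G), Btilde (φ α v : L) (w : L) = Btilde (v : L) (φ α w : L))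
    (nabla : L →ₗ[ℝ] L →ₗ[ℝ] L)
    (hKoszul : ∀ x y z : L,
      2 * Btilde (nabla x y) z = Btilde ⁅x, y⁆ z - Btilde ⁅y, z⁆ x + Btilde ⁅z, x⁆ y)
    -- an orthonormal basis of `𝔤̃`
    (m : ℕ) (f : Module.Basis (Fin m) ℝ L) (δ : Fin m → ℝ) (hδ : ∀ i, δ i = 1 ∨ δ i = -1)
    (horthf : ∀ i j, Btilde (f i) (f j) = if i = j then δ i else 0) :
    ∑ i, δ i * ricci nabla (f i) (f i)
      = -∑ α, ε α * ((LinearMap.trace ℝ ↥G (φ α)) ^ 2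
          + LinearMap.trace ℝ ↥G (φ α ∘ₗ φ α)) :=
  stmt_12_general L Btilde hBsymm hBnondeg G hGabelian k e ε hε hsup hinf hAabelian horth horthA φ
    hφ hIwasawa nabla hKoszul m f δ hδ horthf
end
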